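/- arXiv:1305.1681 — 5 statements merged into one kernel-verified Lean document; each statement's English description precedes it below -/
import Mathlib

section
/- Let G=(V,w) be a weighted graph on n vertices that is a γ-stable instance of Max Cut (γ ≥ 1) with maximum cut (S,S̄). Let {ū_u : u ∈ V} be a feasible solution of the Goemans–Williamson SDP relaxation with triangle inequalities whose objective value is at least w(E(S,S̄)), and define û_u = ū_u for u ∈ S and û_u = −ū_u for u ∉ S. Assume that whenever the vectors {û_u : u ∈ V} are not all equal, there exist a real σ > 0 and a finitely supported probability distribution over subsets A of V with ∅ ≠ A ≠ V such that for every pair of vertices u,v: σ·Pr[exactly one of u,v lies in A] ≤ ‖û_u − û_v‖² ≤ σ·γ·Pr[exactly one of u,v lies in A] (such a distribution exists whenever γ is at least the least distortion D_{ℓ2²→ℓ1}(n) with which every n-point metric space of negative type embeds into ℓ1). Then the SDP solution is integral: all the vectors û_u are equal, i.e., there is a unit vector ē with ū_u = ē for all u ∈ S and ū_u = −ē for all u ∉ S. -/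
/-!
Flip the vectors off `S`: `û_u = ±ū_u`. For unit vectors `‖ū_u - ū_v‖² = 4 - ‖û_u - û_v‖²`
on edges cut by `S` and `‖ū_u - ū_v‖² = ‖û_u - û_v‖²` on the others, so an SDP value of at least
`w(E(S,S̄))` forces the `ℓ2²`-length of the cut edges under `û` to be at most that of the uncut
ones. If the `û_u` are not all equal, the embedding into a distribution of cuts `A` makes the
first quantity at least `σ·𝔼[w(E(S,S̄) ∩ E(A,Ā))]` and the second at most
`σγ·𝔼[w(E(A,Ā) ∖ E(S,S̄))]`, while `γ`-stability applied to `T = S ∆ A` gives the strict reverse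
inequality for every nontrivial `A`.
-/

open Finset

/-- The pair `{u, v}` is separated by the cut `(S, V∖S)`. -/
abbrev cutSep {V : Type*} (S : Finset V) (u v : V) : Prop :=
  (u ∈ S ∧ v ∉ S) ∨ (v ∈ S ∧ u ∉ S)

/-- Total weight of the set of unordered pairs `{u,v}` satisfying the symmetric
predicate `P`; the sum over ordered pairs counts each unordered pair twice, whence
the division by `2`. -/
noncomputable def cutWeight {V : Type*} [Fintype V] (w : V → V → ℝ)
    (P : V → V → Prop) : ℝ :=
  have := Classical.propDecidable
  (∑ u, ∑ v, if P u v then w u v else 0) / 2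

/-- `G = (V, w)` is a `γ`-stable instance of Max Cut with maximum cut `(S, V∖S)`:
for every cut `(T, V∖T)` different from `(S, V∖S)`,
`w(E(S,S̄)∖E(T,T̄)) > γ·w(E(T,T̄)∖E(S,S̄))`. -/
def IsMaxCutStable {V : Type*} [Fintype V] [DecidableEq V]
    (w : V → V → ℝ) (γ : ℝ) (S : Finset V) : Prop :=
  ∀ T : Finset V, T ≠ S → T ≠ Sᶜ →
    γ * cutWeight w (fun u v => cutSep T u v ∧ ¬ cutSep S u v) <
      cutWeight w (fun u v => cutSep S u v ∧ ¬ cutSep T u v)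

section CutWeight

variable {V : Type*} [Fintype V]

lemma cutWeight_eq_sum (w : V → V → ℝ) (P : V → V → Prop) [∀ u v, Decidable (P u v)] :
    cutWeight w P = (∑ u, ∑ v, if P u v then w u v else 0) / 2 := by
  simp only [cutWeight]
  congr!

lemma cutWeight_congr (w : V → V → ℝ) {P Q : V → V → Prop} (h : ∀ u v, P u v ↔ Q u v) :
    cutWeight w P = cutWeight w Q := by
  rw [show P = Q from funext₂ fun u v => propext (h u v)]

lemma cutWeight_mono {w₁ w₂ : V → V → ℝ} (P : V → V → Prop)
    (h : ∀ u v, P u v → w₁ u v ≤ w₂ u v) : cutWeight w₁ P ≤ cutWeight w₂ P := by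
  classical
  rw [cutWeight_eq_sum, cutWeight_eq_sum]
  gcongr with u _ v _
  split_ifs with hP
  exacts [h u v hP, le_rfl]

lemma cutWeight_const_mul (c : ℝ) (w : V → V → ℝ) (P : V → V → Prop) :
    cutWeight (fun u v => c * w u v) P = c * cutWeight w P := by
  classical
  simp only [cutWeight_eq_sum, mul_div_assoc', mul_sum, mul_ite, mul_zero]

lemma cutWeight_sub (w₁ w₂ : V → V → ℝ) (P : V → V → Prop) :
    cutWeight (fun u v => w₁ u v - w₂ u v) P = cutWeight w₁ P - cutWeight w₂ P := by
  classical
  simp only [cutWeight_eq_sum, ← sub_div, ← sum_sub_distrib, ite_sub_ite, sub_zero]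

lemma cutWeight_sum {ι : Type*} (s : Finset ι) (w : ι → V → V → ℝ) (P : V → V → Prop) :
    cutWeight (fun u v => ∑ i ∈ s, w i u v) P = ∑ i ∈ s, cutWeight (w i) P := by
  classical
  have h : ∀ u v, (if P u v then ∑ i ∈ s, w i u v else 0) =
      ∑ i ∈ s, if P u v then w i u v else 0 := fun u v => by split_ifs <;> simp
  simp only [cutWeight_eq_sum, ← sum_div, h]
  rw [sum_comm (s := s)]
  exact congrArg (· / 2) (sum_congr rfl fun u _ => sum_comm)

lemma cutWeight_ite (w : V → V → ℝ) (P Q : V → V → Prop) [∀ u v, Decidable (Q u v)] :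
    cutWeight (fun u v => if Q u v then w u v else 0) P =
      cutWeight w (fun u v => P u v ∧ Q u v) := by
  classical
  simp only [cutWeight_eq_sum, ite_and]

lemma half_sum_ite_eq_cutWeight_add (f g : V → V → ℝ) (P : V → V → Prop)
    [∀ u v, Decidable (P u v)] :
    (∑ u, ∑ v, if P u v then f u v else g u v) / 2 =
      cutWeight f P + cutWeight g (fun u v => ¬ P u v) := by
  simp only [cutWeight_eq_sum, ← add_div, ← sum_add_distrib]
  congr! 3
  split_ifs <;> simp

lemma cutWeight_mul_sum_ite {ι : Type*} (s : Finset ι) (w : V → V → ℝ) (p : ι → ℝ)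
    (P : V → V → Prop) (Q : ι → V → V → Prop) [∀ i u v, Decidable (Q i u v)] :
    cutWeight (fun u v => w u v * ∑ i ∈ s, p i * (if Q i u v then 1 else 0)) P =
      ∑ i ∈ s, p i * cutWeight w (fun u v => P u v ∧ Q i u v) := by
  simp only [← cutWeight_ite, ← cutWeight_const_mul, ← cutWeight_sum, mul_sum]
  congr! 4
  split_ifs <;> ring

variable {ι : Type*} {w d : V → V → ℝ} {c : ℝ} {s : Finset ι} {p : ι → ℝ}
  {Q : ι → V → V → Prop} [∀ i u v, Decidable (Q i u v)]

lemma mul_sum_cutWeight_le (hw : ∀ u v, 0 ≤ w u v) (P : V → V → Prop)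
    (h : ∀ u v, c * ∑ i ∈ s, p i * (if Q i u v then 1 else 0) ≤ d u v) :
    c * ∑ i ∈ s, p i * cutWeight w (fun u v => P u v ∧ Q i u v) ≤
      cutWeight (fun u v => w u v * d u v) P := by
  rw [← cutWeight_mul_sum_ite, ← cutWeight_const_mul]
  refine cutWeight_mono P fun u v _ => ?_
  rw [mul_left_comm]
  exact mul_le_mul_of_nonneg_left (h u v) (hw u v)

lemma cutWeight_le_mul_sum (hw : ∀ u v, 0 ≤ w u v) (P : V → V → Prop)
    (h : ∀ u v, d u v ≤ c * ∑ i ∈ s, p i * (if Q i u v then 1 else 0)) :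
    cutWeight (fun u v => w u v * d u v) P ≤
      c * ∑ i ∈ s, p i * cutWeight w (fun u v => P u v ∧ Q i u v) := by
  rw [← cutWeight_mul_sum_ite, ← cutWeight_const_mul]
  refine cutWeight_mono P fun u v _ => ?_
  rw [mul_left_comm]
  exact mul_le_mul_of_nonneg_left (h u v) (hw u v)

end CutWeight

lemma sum_mul_lt_sum_mul_of_ne_zero {ι : Type*} (s : Finset ι) {p f g : ι → ℝ}
    (hp : ∀ i ∈ s, 0 ≤ p i) (hs : ∑ i ∈ s, p i ≠ 0) (h : ∀ i ∈ s, p i ≠ 0 → f i < g i) :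
    ∑ i ∈ s, p i * f i < ∑ i ∈ s, p i * g i := by
  obtain ⟨i₀, hi₀, hpi₀⟩ := exists_ne_zero_of_sum_ne_zero hs
  refine sum_lt_sum (fun i hi => ?_) ⟨i₀, hi₀, ?_⟩
  · rcases eq_or_ne (p i) 0 with hpi | hpi
    · simp [hpi]
    · exact mul_le_mul_of_nonneg_left (h i hi hpi).le (hp i hi)
  · exact mul_lt_mul_of_pos_left (h i₀ hi₀ hpi₀) ((hp i₀ hi₀).lt_of_ne' hpi₀)

lemma cutSep_symmDiff {V : Type*} [DecidableEq V] (S A : Finset V) (u v : V) :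
    cutSep (symmDiff S A) u v ↔ ¬(cutSep S u v ↔ cutSep A u v) := by
  simp only [cutSep, mem_symmDiff]
  tauto

lemma IsMaxCutStable.mul_cutWeight_lt {V : Type*} [Fintype V] [DecidableEq V]
    {w : V → V → ℝ} {γ : ℝ} {S : Finset V} (hS : IsMaxCutStable w γ S) {A : Finset V}
    (hA : A ≠ ∅) (hA' : A ≠ univ) :
    γ * cutWeight w (fun u v => ¬ cutSep S u v ∧ cutSep A u v) <
      cutWeight w (fun u v => cutSep S u v ∧ cutSep A u v) := by
  have hT : symmDiff S A ≠ S := fun h => hA (symmDiff_eq_left.mp h)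
  have hT' : symmDiff S A ≠ Sᶜ := fun h => hA' <| by
    rw [← symmDiff_symmDiff_cancel_left S A, h, symmDiff_compl_self, top_eq_univ]
  have hgain : ∀ u v, cutSep (symmDiff S A) u v ∧ ¬ cutSep S u v ↔
      ¬ cutSep S u v ∧ cutSep A u v := fun u v => by rw [cutSep_symmDiff]; tauto
  have hloss : ∀ u v, cutSep S u v ∧ ¬ cutSep (symmDiff S A) u v ↔
      cutSep S u v ∧ cutSep A u v := fun u v => by rw [cutSep_symmDiff]; tauto
  simpa only [cutWeight_congr w hgain, cutWeight_congr w hloss] using hS _ hT hT'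

lemma norm_sub_sq_eq_four_sub_norm_add_sq {E : Type*} [SeminormedAddCommGroup E]
    [InnerProductSpace ℝ E] {a b : E} (ha : ‖a‖ = 1) (hb : ‖b‖ = 1) :
    ‖a - b‖ ^ 2 = 4 - ‖a + b‖ ^ 2 := by
  have := parallelogram_law_with_norm ℝ a b
  rw [ha, hb] at this
  linarith

lemma IsMaxCutStable.mul_sum_cutWeight_lt {V : Type*} [Fintype V] [DecidableEq V]
    {w : V → V → ℝ} {γ : ℝ} {S : Finset V} (hS : IsMaxCutStable w γ S) {p : Finset V → ℝ}
    (hp₀ : ∀ A, 0 ≤ p A) (hp₁ : ∑ A, p A ≠ 0) (hp : ∀ A, p A ≠ 0 → A ≠ ∅ ∧ A ≠ univ) :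
    γ * ∑ A, p A * cutWeight w (fun u v => ¬ cutSep S u v ∧ cutSep A u v) <
      ∑ A, p A * cutWeight w (fun u v => cutSep S u v ∧ cutSep A u v) := by
  simp only [mul_sum, mul_left_comm γ]
  exact sum_mul_lt_sum_mul_of_ne_zero _ (fun A _ => hp₀ A) hp₁
    fun A _ hA => hS.mul_cutWeight_lt (hp A hA).1 (hp A hA).2

section SwitchSign

variable {V H : Type*} [DecidableEq V]

def switchSign [Neg H] (S : Finset V) (x : V → H) (u : V) : H :=
  if u ∈ S then x u else -x u

lemma switchSign_switchSign [InvolutiveNeg H] (S : Finset V) (x : V → H) :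
    switchSign S (switchSign S x) = x := by
  funext u
  unfold switchSign
  split_ifs <;> simp

variable [SeminormedAddCommGroup H] (S : Finset V) (x : V → H) {u v : V}

lemma norm_switchSign (u : V) : ‖switchSign S x u‖ = ‖x u‖ := by
  unfold switchSign
  split_ifs <;> simp

lemma norm_switchSign_sub_of_cutSep (h : cutSep S u v) :
    ‖switchSign S x u - switchSign S x v‖ = ‖x u + x v‖ := by
  unfold switchSign
  rcases h with ⟨hu, hv⟩ | ⟨hv, hu⟩
  · simp [hu, hv]
  · rw [if_neg hu, if_pos hv, ← norm_neg]
    congr 1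
    abel

lemma norm_switchSign_sub_of_not_cutSep (h : ¬ cutSep S u v) :
    ‖switchSign S x u - switchSign S x v‖ = ‖x u - x v‖ := by
  unfold switchSign
  by_cases hu : u ∈ S <;> by_cases hv : v ∈ S
  · simp [hu, hv]
  · exact absurd (Or.inl ⟨hu, hv⟩) h
  · exact absurd (Or.inr ⟨hv, hu⟩) h
  · rw [if_neg hu, if_neg hv, neg_sub_neg, norm_sub_rev]

lemma exists_norm_eq_one_eq_ite_of_switchSign_eq [Nonempty V] (hx : ∀ u, ‖x u‖ = 1)
    (h : ∀ u v, switchSign S x u = switchSign S x v) :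
    ∃ e : H, ‖e‖ = 1 ∧ ∀ u, x u = if u ∈ S then e else -e := by
  obtain ⟨u₀⟩ := ‹Nonempty V›
  refine ⟨switchSign S x u₀, by rw [norm_switchSign, hx], fun u => ?_⟩
  rw [← h u u₀]
  exact congrFun (switchSign_switchSign S x).symm u

variable [InnerProductSpace ℝ H]

lemma norm_sub_sq_eq_ite_switchSign (hx : ∀ u, ‖x u‖ = 1) (u v : V) :
    ‖x u - x v‖ ^ 2 = if cutSep S u v then 4 - ‖switchSign S x u - switchSign S x v‖ ^ 2
      else ‖switchSign S x u - switchSign S x v‖ ^ 2 := by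
  split_ifs with h
  · rw [norm_switchSign_sub_of_cutSep S x h]
    exact norm_sub_sq_eq_four_sub_norm_add_sq (hx u) (hx v)
  · rw [norm_switchSign_sub_of_not_cutSep S x h]

lemma cutWeight_switchSign_cut_le_uncut [Fintype V] (w : V → V → ℝ) (hx : ∀ u, ‖x u‖ = 1)
    (hobj : cutWeight w (cutSep S) ≤ ((∑ u, ∑ v, w u v * ‖x u - x v‖ ^ 2) / 2) / 4) :
    cutWeight (fun u v => w u v * ‖switchSign S x u - switchSign S x v‖ ^ 2) (cutSep S) ≤
      cutWeight (fun u v => w u v * ‖switchSign S x u - switchSign S x v‖ ^ 2)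
        (fun u v => ¬ cutSep S u v) := by
  set d := fun u v => w u v * ‖switchSign S x u - switchSign S x v‖ ^ 2
  have hpt : ∀ u v, w u v * ‖x u - x v‖ ^ 2 =
      if cutSep S u v then 4 * w u v - d u v else d u v := fun u v => by
    rw [norm_sub_sq_eq_ite_switchSign S x hx]
    split_ifs <;> ring
  simp only [hpt, half_sum_ite_eq_cutWeight_add, cutWeight_sub, cutWeight_const_mul] at hobj
  linarith

end SwitchSign

theorem stmt0_general {V : Type*} [Fintype V] [DecidableEq V] [Nonempty V]
    {H : Type*} [NormedAddCommGroup H] [InnerProductSpace ℝ H]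
    (w : V → V → ℝ) (hnonneg : ∀ u v, 0 ≤ w u v)
    (γ : ℝ) (S : Finset V)
    (hstable : IsMaxCutStable w γ S)
    (ubar : V → H) (hunit : ∀ u, ‖ubar u‖ = 1)
    (hobj : cutWeight w (cutSep S) ≤ ((∑ u, ∑ v, w u v * ‖ubar u - ubar v‖ ^ 2) / 2) / 4)
    (hat : V → H) (hhat : ∀ u, hat u = if u ∈ S then ubar u else -ubar u)
    (hembed : (¬ ∀ u v : V, hat u = hat v) →
      ∃ σ : ℝ, 0 < σ ∧ ∃ p : Finset V → ℝ,
        (∀ A, 0 ≤ p A) ∧ (∑ A : Finset V, p A = 1) ∧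
        (∀ A, p A ≠ 0 → A ≠ ∅ ∧ A ≠ Finset.univ) ∧
        (∀ u v : V,
          σ * (∑ A : Finset V, p A * (if cutSep A u v then 1 else 0)) ≤
              ‖hat u - hat v‖ ^ 2 ∧
          ‖hat u - hat v‖ ^ 2 ≤
              σ * γ * (∑ A : Finset V, p A * (if cutSep A u v then 1 else 0)))) :
    ∃ e : H, ‖e‖ = 1 ∧ ∀ u, ubar u = if u ∈ S then e else -e := by
  obtain rfl : hat = switchSign S ubar := funext hhat
  refine exists_norm_eq_one_eq_ite_of_switchSign_eq S ubar hunit (by_contra fun hne => ?_)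
  obtain ⟨σ, hσ, p, hp₀, hp₁, hp, hdist⟩ := hembed hne
  have hcut := mul_sum_cutWeight_le hnonneg (cutSep S) fun u v => (hdist u v).1
  have huncut :=
    cutWeight_le_mul_sum hnonneg (fun u v => ¬ cutSep S u v) fun u v => (hdist u v).2
  have hstable_avg := hstable.mul_sum_cutWeight_lt hp₀ (by rw [hp₁]; exact one_ne_zero) hp
  have hsdp := cutWeight_switchSign_cut_le_uncut S ubar w hunit hobj
  linarith [mul_lt_mul_of_pos_left hstable_avg hσ]

/-- Let `G = (V, w)` be a `γ`-stable instance of Max Cut (`γ ≥ 1`) with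
maximum cut `(S, S̄)`, and let `{ū_u}` be a feasible solution of the Goemans–Williamson SDP
relaxation with `ℓ2²`-triangle inequalities whose objective value is at least `w(E(S,S̄))`.
Set `û_u = ū_u` for `u ∈ S` and `û_u = −ū_u` for `u ∉ S`.  Assume that whenever the vectors
`û_u` are not all equal there are `σ > 0` and a finitely supported probability distribution
over subsets `∅ ≠ A ≠ V` with
`σ·Pr[A separates u,v] ≤ ‖û_u − û_v‖² ≤ σ·γ·Pr[A separates u,v]` for all `u, v`.
Then the SDP solution is integral: there is a unit vector `ē` with `ū_u = ē` on `S` and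
`ū_u = −ē` off `S`. -/
theorem stmt0 {V : Type*} [Fintype V] [DecidableEq V] [Nonempty V]
    {H : Type*} [NormedAddCommGroup H] [InnerProductSpace ℝ H]
    (w : V → V → ℝ) (hsymm : ∀ u v, w u v = w v u) (hnonneg : ∀ u v, 0 ≤ w u v)
    (γ : ℝ) (hγ : 1 ≤ γ) (S : Finset V)
    (hstable : IsMaxCutStable w γ S)
    (ubar : V → H) (hunit : ∀ u, ‖ubar u‖ = 1)
    (htri : ∀ x ∈ {y : H | ∃ u, y = ubar u ∨ y = -ubar u},
            ∀ y ∈ {y : H | ∃ u, y = ubar u ∨ y = -ubar u},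
            ∀ z ∈ {y : H | ∃ u, y = ubar u ∨ y = -ubar u},
              ‖x - y‖ ^ 2 + ‖y - z‖ ^ 2 ≥ ‖x - z‖ ^ 2)
    (hobj : cutWeight w (cutSep S) ≤ ((∑ u, ∑ v, w u v * ‖ubar u - ubar v‖ ^ 2) / 2) / 4)
    (hat : V → H) (hhat : ∀ u, hat u = if u ∈ S then ubar u else -ubar u)
    (hembed : (¬ ∀ u v : V, hat u = hat v) →
      ∃ σ : ℝ, 0 < σ ∧ ∃ p : Finset V → ℝ,
        (∀ A, 0 ≤ p A) ∧ (∑ A : Finset V, p A = 1) ∧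
        (∀ A, p A ≠ 0 → A ≠ ∅ ∧ A ≠ Finset.univ) ∧
        (∀ u v : V,
          σ * (∑ A : Finset V, p A * (if cutSep A u v then 1 else 0)) ≤
              ‖hat u - hat v‖ ^ 2 ∧
          ‖hat u - hat v‖ ^ 2 ≤
              σ * γ * (∑ A : Finset V, p A * (if cutSep A u v then 1 else 0)))) :
    ∃ e : H, ‖e‖ = 1 ∧ ∀ u, ubar u = if u ∈ S then e else -e :=
  stmt0_general w hnonneg γ S hstable ubar hunit hobj hat hhat hembed
end

section
/- Let (G=(V,w); s₁,…,s_k) be a Minimum Multiway Cut instance and let {x_u : u ∈ V} be a feasible solution of the CKR LP relaxation; write d(u,v) = ‖x_u − x_v‖₁/2. Then there exists a finitely supported probability distribution over functions f : V → {1,…,k} with f(s_i) = i for every i (i.e., over multiway cuts) such that for every pair of vertices u,v: Pr[f(u) ≠ f(v)] ≤ 2·d(u,v)/(1 + d(u,v)); in particular Pr[f(u) ≠ f(v)] ≤ 2·d(u,v) and Pr[f(u) = f(v)] ≥ (1 − d(u,v))/2. Moreover, if the LP solution is not integral, then the support of the distribution contains at least two distinct functions. -/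
open Finset

/-- `f : V → Fin k` is a multiway cut for terminals `s`: vertex `s i` lies in part `i`. -/
def IsMultiwayCut {V : Type*} {k : ℕ} (s : Fin k → V) (f : V → Fin k) : Prop :=
  ∀ i, f (s i) = i

/-- Feasibility for the CKR LP relaxation: each vertex is assigned a point of the standard
simplex in `ℝ^k`, and terminal `s i` is assigned the `i`-th standard basis vector. -/
def CKRFeasible {V : Type*} {k : ℕ} (s : Fin k → V) (x : V → Fin k → ℝ) : Prop :=
  (∀ u i, 0 ≤ x u i) ∧ (∀ u, ∑ i, x u i = 1) ∧ (∀ i, x (s i) = Pi.single i 1)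

/-!
The distribution is that of the Kleinberg–Tardos rounding process: while some vertices are
unlabelled, pick a label `i` and a threshold `t` uniformly from the region under the graph of
`i ↦ max {x a i | a unlabelled}`, and give label `i` to every unlabelled `a` with `t ≤ x a i`.
A step that labels `u` or `v` labels both of them with probability
`∑ min (x u i) (x v i) / ∑ max (x u i) (x v i) = (1 - d) / (1 + d)`, and a step that labels
neither leaves their situation unchanged, so they end up together with at least that
probability. Only the interval between consecutive values of `x · i` containing `t` matters,
which makes the process finite. Labels are always taken from the support of `x a`, so terminals
keep their own label, and a vertex with two positive coordinates gets either label with positive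
probability.
-/

/-- The length of the interval from the largest element of `s` below `t` up to `t`; the
interval starts at `0` when there is no such element, since `sSup ∅ = 0`. -/
noncomputable def gapBelow (s : Finset ℝ) (t : ℝ) : ℝ :=
  t - sSup (↑{r ∈ s | r < t} : Set ℝ)

lemma gapBelow_nonneg (s : Finset ℝ) {t : ℝ} (ht : 0 ≤ t) : 0 ≤ gapBelow s t := by
  have : sSup (↑{r ∈ s | r < t} : Set ℝ) ≤ t :=
    Real.sSup_le (fun r hr => (mem_filter.1 hr).2.le) ht
  unfold gapBelow; linarith

lemma gapBelow_zero {s : Finset ℝ} (hs : ∀ r ∈ s, 0 ≤ r) : gapBelow s 0 = 0 := by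
  have : {r ∈ s | r < 0} = ∅ := filter_eq_empty_iff.2 fun r hr => not_lt.2 (hs r hr)
  simp [gapBelow, this]

lemma sum_gapBelow (s : Finset ℝ) : ∑ t ∈ s, gapBelow s t = sSup (s : Set ℝ) := by
  induction s using Finset.induction_on_max with
  | empty => simp
  | insert a s has ih =>
    have has' : a ∉ s := fun h => (has a h).false
    have hbelow_a : {r ∈ insert a s | r < a} = s := by
      rw [filter_insert, if_neg (lt_irrefl a), filter_true_of_mem has]
    have hgap : ∀ t ∈ s, gapBelow (insert a s) t = gapBelow s t := fun t ht => by
      rw [gapBelow, gapBelow, filter_insert, if_neg (has t ht).not_gt]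
    have hsup : sSup (↑(insert a s) : Set ℝ) = a :=
      IsGreatest.csSup_eq ⟨by simp, by simpa [upperBounds] using fun t ht => (has t ht).le⟩
    rw [sum_insert has', sum_congr rfl hgap, ih, gapBelow, hbelow_a, hsup]
    ring

lemma sum_gapBelow_mul_le {s : Finset ℝ} {c : ℝ} (hc : c ∈ s) :
    ∑ t ∈ s, gapBelow s t * (if t ≤ c then 1 else 0) = c := by
  have hgap : ∀ t ∈ {r ∈ s | r ≤ c}, gapBelow s t = gapBelow {r ∈ s | r ≤ c} t := by
    intro t ht
    have htc := (mem_filter.1 ht).2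
    rw [gapBelow, gapBelow, filter_filter]
    congr 4
    ext r
    exact ⟨fun h => ⟨by linarith, h⟩, fun h => h.2⟩
  have hsup : sSup (↑{r ∈ s | r ≤ c} : Set ℝ) = c :=
    IsGreatest.csSup_eq ⟨by simp [hc], fun r hr => (mem_filter.1 hr).2⟩
  simp only [mul_boole]
  rw [← sum_filter, sum_congr rfl hgap, sum_gapBelow, hsup]

lemma sum_gapBelow_mul_ite_add_mul {s : Finset ℝ} {m M : ℝ} (hm : m ∈ s) (hM : M ∈ s)
    (ρ : ℝ) :
    ∑ t ∈ s, gapBelow s t * ((if t ≤ m then 1 else 0) + ρ * (1 - if t ≤ M then 1 else 0)) =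
      m + ρ * (sSup (s : Set ℝ) - M) := by
  simp only [mul_add, mul_sub, mul_one, sum_add_distrib, sum_sub_distrib, mul_left_comm _ ρ,
    ← mul_sum, ← sum_mul, sum_gapBelow_mul_le hm, sum_gapBelow_mul_le hM, sum_gapBelow]
  ring

section KleinbergTardos

variable {V : Type*} {k : ℕ}

noncomputable def levels (x : V → Fin k → ℝ) (U : Finset V) (i : Fin k) : Finset ℝ :=
  U.image (x · i)

noncomputable def ktWeight (x : V → Fin k → ℝ) (U : Finset V) : ℝ :=
  ∑ i, sSup (↑(levels x U i) : Set ℝ)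

variable {x : V → Fin k → ℝ} {U : Finset V} {i : Fin k} {t : ℝ}

lemma mem_levels {u : V} (hu : u ∈ U) (i : Fin k) : x u i ∈ levels x U i :=
  mem_image_of_mem _ hu

lemma min_mem_levels {u v : V} (hu : u ∈ U) (hv : v ∈ U) (i : Fin k) :
    min (x u i) (x v i) ∈ levels x U i := by
  rcases min_choice (x u i) (x v i) with h | h <;> rw [h] <;> exact mem_levels ‹_› i

lemma max_mem_levels {u v : V} (hu : u ∈ U) (hv : v ∈ U) (i : Fin k) :
    max (x u i) (x v i) ∈ levels x U i := by
  rcases max_choice (x u i) (x v i) with h | h <;> rw [h] <;> exact mem_levels ‹_› i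

lemma nonneg_of_mem_levels (hx0 : ∀ u i, 0 ≤ x u i) (ht : t ∈ levels x U i) : 0 ≤ t := by
  obtain ⟨a, -, rfl⟩ := mem_image.1 ht
  exact hx0 a i

lemma filter_lt_ssubset_of_mem_levels (ht : t ∈ levels x U i) : {a ∈ U | x a i < t} ⊂ U := by
  obtain ⟨a, ha, rfl⟩ := mem_image.1 ht
  exact filter_ssubset.2 ⟨a, ha, lt_irrefl _⟩

lemma ktWeight_nonneg (hx0 : ∀ u i, 0 ≤ x u i) : 0 ≤ ktWeight x U :=
  sum_nonneg fun _ _ => Real.sSup_nonneg fun _ ht => nonneg_of_mem_levels hx0 ht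

lemma ktWeight_pos (hx1 : ∀ u, ∑ i, x u i = 1) (hU : U.Nonempty) : 0 < ktWeight x U := by
  obtain ⟨u, hu⟩ := hU
  refine one_pos.trans_le ?_
  rw [← hx1 u]
  exact sum_le_sum fun i _ => le_csSup (levels x U i).bddAbove (mem_levels hu i)

variable [DecidableEq V]

noncomputable def relabel (x : V → Fin k → ℝ) (U : Finset V) (i : Fin k) (t : ℝ)
    (g : V → Fin k) : V → Fin k :=
  {a ∈ U | t ≤ x a i}.piecewise (fun _ => i) g

lemma relabel_of_le {g : V → Fin k} {a : V} (ha : a ∈ U) (hat : t ≤ x a i) :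
    relabel x U i t g a = i :=
  piecewise_eq_of_mem _ _ _ (mem_filter.2 ⟨ha, hat⟩)

lemma relabel_of_notMem {g : V → Fin k} {a : V} (ha : a ∉ U) : relabel x U i t g a = g a :=
  piecewise_eq_of_notMem _ _ _ fun h => ha (mem_filter.1 h).1

variable [Fintype V]

/-- `ktDist x U g f` is the probability that the rounding process, started with the vertices of
`U` unlabelled and every other vertex `a` labelled `g a`, ends with the labelling `f`. -/
noncomputable def ktDist (x : V → Fin k → ℝ) (U : Finset V) (g f : V → Fin k) : ℝ :=
  if U = ∅ then if f = g then 1 else 0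
  else (∑ i, ∑ t ∈ (levels x U i).attach, gapBelow (levels x U i) t *
      ktDist x {a ∈ U | x a i < t} (relabel x U i t g) f) / ktWeight x U
termination_by U.card
decreasing_by exact card_lt_card (filter_lt_ssubset_of_mem_levels t.2)

variable {g f : V → Fin k}

lemma ktDist_empty : ktDist x ∅ g f = if f = g then 1 else 0 := by
  rw [ktDist, if_pos rfl]

lemma ktDist_of_nonempty (hU : U.Nonempty) :
    ktDist x U g f = (∑ i, ∑ t ∈ levels x U i, gapBelow (levels x U i) t *
      ktDist x {a ∈ U | x a i < t} (relabel x U i t g) f) / ktWeight x U := by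
  rw [ktDist, if_neg hU.ne_empty]
  congr 1
  exact sum_congr rfl fun i _ => sum_attach _ fun t => gapBelow (levels x U i) t *
    ktDist x {a ∈ U | x a i < t} (relabel x U i t g) f

lemma ktDist_nonneg (hx0 : ∀ u i, 0 ≤ x u i) : 0 ≤ ktDist x U g f := by
  induction U using Finset.strongInduction generalizing g with
  | H U ih =>
    rcases U.eq_empty_or_nonempty with rfl | hU
    · rw [ktDist_empty]; split_ifs <;> norm_num
    rw [ktDist_of_nonempty hU]
    refine div_nonneg (sum_nonneg fun i _ => sum_nonneg fun t ht => mul_nonneg ?_ ?_)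
      (ktWeight_nonneg hx0)
    · exact gapBelow_nonneg _ (nonneg_of_mem_levels hx0 ht)
    · exact ih _ (filter_lt_ssubset_of_mem_levels ht)

lemma exists_step_of_ktDist_ne_zero (hU : U.Nonempty) (h : ktDist x U g f ≠ 0) :
    ∃ i, ∃ t ∈ levels x U i, gapBelow (levels x U i) t ≠ 0 ∧
      ktDist x {a ∈ U | x a i < t} (relabel x U i t g) f ≠ 0 := by
  rw [ktDist_of_nonempty hU] at h
  obtain ⟨i, -, hi⟩ := exists_ne_zero_of_sum_ne_zero (div_ne_zero_iff.1 h).1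
  obtain ⟨t, ht, hti⟩ := exists_ne_zero_of_sum_ne_zero hi
  exact ⟨i, t, ht, left_ne_zero_of_mul hti, right_ne_zero_of_mul hti⟩

lemma eqOn_of_ktDist_ne_zero (h : ktDist x U g f ≠ 0) : ∀ a ∉ U, f a = g a := by
  induction U using Finset.strongInduction generalizing g with
  | H U ih =>
    rcases U.eq_empty_or_nonempty with rfl | hU
    · rw [ktDist_empty, ite_ne_right_iff] at h
      exact fun a _ => congrFun h.1 a
    obtain ⟨i, t, ht, -, hnext⟩ := exists_step_of_ktDist_ne_zero hU h
    intro a ha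
    rw [ih _ (filter_lt_ssubset_of_mem_levels ht) hnext a fun h' => ha (mem_filter.1 h').1,
      relabel_of_notMem ha]

lemma pos_of_ktDist_ne_zero (hx0 : ∀ u i, 0 ≤ x u i) (hg : ∀ a ∉ U, 0 < x a (g a))
    (h : ktDist x U g f ≠ 0) (a : V) : 0 < x a (f a) := by
  induction U using Finset.strongInduction generalizing g with
  | H U ih =>
    rcases U.eq_empty_or_nonempty with rfl | hU
    · rw [ktDist_empty, ite_ne_right_iff] at h
      exact h.1 ▸ hg a (notMem_empty a)
    obtain ⟨i, t, ht, hgap, hnext⟩ := exists_step_of_ktDist_ne_zero hU h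
    have ht0 : 0 < t := (nonneg_of_mem_levels hx0 ht).lt_of_ne
      fun h0 => hgap (h0 ▸ gapBelow_zero fun r hr => nonneg_of_mem_levels hx0 hr)
    refine ih _ (filter_lt_ssubset_of_mem_levels ht) (fun b hb => ?_) hnext
    by_cases hbU : b ∈ U
    · have hbt : t ≤ x b i := not_lt.1 fun hlt => hb (mem_filter.2 ⟨hbU, hlt⟩)
      rw [relabel_of_le hbU hbt]
      exact ht0.trans_le hbt
    · rw [relabel_of_notMem hbU]
      exact hg b hbU

lemma sum_ktDist_mul (hU : U.Nonempty) (φ : (V → Fin k) → ℝ) :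
    ∑ f, ktDist x U g f * φ f = (∑ i, ∑ t ∈ levels x U i, gapBelow (levels x U i) t *
      ∑ f, ktDist x {a ∈ U | x a i < t} (relabel x U i t g) f * φ f) /
    ktWeight x U := by
  simp only [ktDist_of_nonempty hU, div_mul_eq_mul_div, ← sum_div, sum_mul, mul_sum, mul_assoc]
  rw [sum_comm]
  exact congrArg (· / ktWeight x U) (sum_congr rfl fun i _ => sum_comm)

lemma sum_ktDist (hx1 : ∀ u, ∑ i, x u i = 1) : ∑ f, ktDist x U g f = 1 := by
  induction U using Finset.strongInduction generalizing g with
  | H U ih =>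
    rcases U.eq_empty_or_nonempty with rfl | hU
    · simp [ktDist_empty]
    have := sum_ktDist_mul (x := x) (g := g) hU fun _ => 1
    simp only [mul_one] at this
    rw [this, div_eq_one_iff_eq (ktWeight_pos hx1 hU).ne', ktWeight]
    refine sum_congr rfl fun i _ => ?_
    rw [← sum_gapBelow]
    exact sum_congr rfl fun t ht => by rw [ih _ (filter_lt_ssubset_of_mem_levels ht), mul_one]

lemma sum_ktDist_mul_of_eqOn (hx1 : ∀ u, ∑ i, x u i = 1) {φ : (V → Fin k) → ℝ} {c : ℝ}
    (hφ : ∀ f, (∀ a ∉ U, f a = g a) → φ f = c) : ∑ f, ktDist x U g f * φ f = c := by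
  calc ∑ f, ktDist x U g f * φ f = ∑ f, ktDist x U g f * c := by
        refine sum_congr rfl fun f _ => ?_
        by_cases h : ktDist x U g f = 0
        · rw [h, zero_mul, zero_mul]
        · rw [hφ f (eqOn_of_ktDist_ne_zero h)]
    _ = c := by rw [← sum_mul, sum_ktDist hx1, one_mul]

lemma div_le_sum_ktDist_mul_same (hx0 : ∀ u i, 0 ≤ x u i) (hx1 : ∀ u, ∑ i, x u i = 1)
    {u v : V} (hu : u ∈ U) (hv : v ∈ U) :
    (∑ i, min (x u i) (x v i)) / ∑ i, max (x u i) (x v i) ≤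
      ∑ f, ktDist x U g f * if f u = f v then 1 else 0 := by
  induction U using Finset.strongInduction generalizing g with
  | H U ih =>
    set ρ := (∑ i, min (x u i) (x v i)) / ∑ i, max (x u i) (x v i)
    have hU : U.Nonempty := ⟨u, hu⟩
    have hstep : ∀ i, ∀ t ∈ levels x U i,
        (if t ≤ min (x u i) (x v i) then 1 else 0) +
            ρ * (1 - if t ≤ max (x u i) (x v i) then 1 else 0) ≤
          ∑ f, ktDist x {a ∈ U | x a i < t} (relabel x U i t g) f *
            if f u = f v then 1 else 0 := by
      intro i t ht
      by_cases hmin : t ≤ min (x u i) (x v i)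
      · obtain ⟨hut, hvt⟩ := le_min_iff.1 hmin
        rw [if_pos hmin, if_pos (hmin.trans (min_le_max)), sub_self, mul_zero, add_zero]
        refine (sum_ktDist_mul_of_eqOn hx1 fun f hf => ?_).ge
        have hlabel : ∀ a ∈ U, t ≤ x a i → f a = i := fun a ha hat => by
          rw [hf a fun h' => (not_lt.2 hat) (mem_filter.1 h').2, relabel_of_le ha hat]
        rw [if_pos (by rw [hlabel u hu hut, hlabel v hv hvt])]
      by_cases hmax : t ≤ max (x u i) (x v i)
      · rw [if_neg hmin, if_pos hmax, sub_self, mul_zero, add_zero]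
        exact sum_nonneg fun f _ => mul_nonneg (ktDist_nonneg hx0) (by positivity)
      rw [if_neg hmin, if_neg hmax, sub_zero, mul_one, zero_add]
      obtain ⟨hut, hvt⟩ := max_lt_iff.1 (not_le.1 hmax)
      exact ih _ (filter_lt_ssubset_of_mem_levels ht) (mem_filter.2 ⟨hu, hut⟩)
        (mem_filter.2 ⟨hv, hvt⟩)
    have hρ : ρ * ∑ i, max (x u i) (x v i) = ∑ i, min (x u i) (x v i) := by
      refine div_mul_cancel₀ _ (one_pos.trans_le ?_).ne'
      rw [← hx1 u]
      exact sum_le_sum fun i _ => le_max_left _ _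
    rw [sum_ktDist_mul hU, le_div_iff₀ (ktWeight_pos hx1 hU)]
    calc ρ * ktWeight x U
        = ∑ i, (min (x u i) (x v i) +
            ρ * (sSup (↑(levels x U i) : Set ℝ) - max (x u i) (x v i))) := by
          rw [sum_add_distrib, ← mul_sum, sum_sub_distrib, ktWeight]
          linear_combination hρ
      _ = _ := (sum_congr rfl fun i _ => sum_gapBelow_mul_ite_add_mul
          (min_mem_levels hu hv i) (max_mem_levels hu hv i) ρ).symm
      _ ≤ _ := sum_le_sum fun i _ => sum_le_sum fun t ht => mul_le_mul_of_nonneg_left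
          (hstep i t ht) (gapBelow_nonneg _ (nonneg_of_mem_levels hx0 ht))

lemma exists_ktDist_ne_zero_apply_eq (hx0 : ∀ u i, 0 ≤ x u i) (hx1 : ∀ u, ∑ i, x u i = 1)
    {u : V} (hu : u ∈ U) (hpos : 0 < x u i) : ∃ f, ktDist x U g f ≠ 0 ∧ f u = i := by
  obtain ⟨t, ht, hgap⟩ : ∃ t ∈ levels x U i,
      0 < gapBelow (levels x U i) t * if t ≤ x u i then 1 else 0 := by
    refine exists_lt_of_sum_lt ?_
    rwa [sum_const_zero, sum_gapBelow_mul_le (mem_levels hu i)]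
  have hut : t ≤ x u i := by
    by_contra h
    rw [if_neg h, mul_zero] at hgap
    exact lt_irrefl _ hgap
  rw [if_pos hut, mul_one] at hgap
  obtain ⟨f, -, hf⟩ := exists_ne_zero_of_sum_ne_zero
    ((sum_ktDist hx1 (U := {a ∈ U | x a i < t}) (g := relabel x U i t g)).symm ▸ one_ne_zero)
  refine ⟨f, ne_of_gt ?_, ?_⟩
  · have hterm : ∀ j, ∀ s ∈ levels x U j, 0 ≤ gapBelow (levels x U j) s *
        ktDist x {a ∈ U | x a j < s} (relabel x U j s g) f :=
      fun j s hs => mul_nonneg (gapBelow_nonneg _ (nonneg_of_mem_levels hx0 hs)) (ktDist_nonneg hx0)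
    rw [ktDist_of_nonempty ⟨u, hu⟩]
    refine div_pos (sum_pos' (fun j _ => sum_nonneg (hterm j)) ⟨i, mem_univ i, ?_⟩)
      (ktWeight_pos hx1 ⟨u, hu⟩)
    exact sum_pos' (hterm i) ⟨t, ht, mul_pos hgap ((ktDist_nonneg hx0).lt_of_ne' hf)⟩
  · rw [eqOn_of_ktDist_ne_zero hf u fun h => not_lt.2 hut (mem_filter.1 h).2,
      relabel_of_le hu hut]

end KleinbergTardos

section Simplex

variable {ι : Type*} [Fintype ι] {y z : ι → ℝ}

lemma sum_min_div_sum_max (hy : ∑ i, y i = 1) (hz : ∑ i, z i = 1) :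
    (∑ i, min (y i) (z i)) / ∑ i, max (y i) (z i) =
      (1 - (∑ i, |y i - z i|) / 2) / (1 + (∑ i, |y i - z i|) / 2) := by
  have hadd : ∑ i, min (y i) (z i) + ∑ i, max (y i) (z i) = 2 := by
    rw [← sum_add_distrib]
    simp only [min_add_max, sum_add_distrib, hy, hz]
    norm_num
  have hsub : ∑ i, max (y i) (z i) - ∑ i, min (y i) (z i) = ∑ i, |y i - z i| := by
    rw [← sum_sub_distrib]
    exact sum_congr rfl fun i _ => by rw [max_sub_min_eq_abs, abs_sub_comm]
  congr 1 <;> linarith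

lemma sum_abs_sub_le_two (hy0 : ∀ i, 0 ≤ y i) (hz0 : ∀ i, 0 ≤ z i) (hy : ∑ i, y i = 1)
    (hz : ∑ i, z i = 1) : ∑ i, |y i - z i| ≤ 2 := by
  calc ∑ i, |y i - z i| ≤ ∑ i, (y i + z i) :=
        sum_le_sum fun i _ => abs_sub_le_iff.2 ⟨by linarith [hz0 i], by linarith [hy0 i]⟩
    _ = 2 := by rw [sum_add_distrib, hy, hz]; norm_num

lemma exists_ne_pos_pos_of_ne_single [DecidableEq ι] (hy0 : ∀ i, 0 ≤ y i) (hy : ∑ i, y i = 1)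
    (h : ∀ i, y ≠ Pi.single i 1) : ∃ i j, i ≠ j ∧ 0 < y i ∧ 0 < y j := by
  obtain ⟨i, -, hi⟩ := exists_lt_of_sum_lt (s := univ) (f := 0) (g := y) (by simp [hy])
  by_contra hne
  push Not at hne
  have hj : ∀ j ≠ i, y j = 0 := fun j hji => le_antisymm (hne i j (Ne.symm hji) hi) (hy0 j)
  have hyi : y i = 1 := by rw [← hy, sum_eq_single i (fun j _ => hj j) (by simp)]
  refine h i (funext fun j => ?_)
  by_cases hji : j = i
  · rw [hji, hyi, Pi.single_eq_same]
  · rw [hj j hji, Pi.single_eq_of_ne hji]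

end Simplex

lemma cut_probability_bounds {d p q : ℝ} (hd0 : 0 ≤ d) (hd1 : d ≤ 1) (hpq : p + q = 1)
    (hq : (1 - d) / (1 + d) ≤ q) :
    p ≤ 2 * d / (1 + d) ∧ p ≤ 2 * d ∧ (1 - d) / 2 ≤ q := by
  have hsep : 2 * d / (1 + d) = 1 - (1 - d) / (1 + d) := by field_simp; ring
  refine ⟨by linarith, ?_, ?_⟩
  · calc p ≤ 2 * d / (1 + d) := by linarith
      _ ≤ 2 * d := div_le_self (by positivity) (by linarith)
  · calc (1 - d) / 2 ≤ (1 - d) / (1 + d) :=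
          div_le_div_of_nonneg_left (by linarith) (by linarith) (by linarith)
      _ ≤ q := hq

theorem stmt5_general {V : Type*} [Fintype V] [DecidableEq V] {k : ℕ}
    (s : Fin k → V)
    (x : V → Fin k → ℝ) (hfeas : CKRFeasible s x) :
    ∃ p : (V → Fin k) → ℝ,
      (∀ f, 0 ≤ p f) ∧ (∑ f : V → Fin k, p f = 1) ∧
      (∀ f, p f ≠ 0 → IsMultiwayCut s f) ∧
      (∀ u v : V,
        (∑ f : V → Fin k, p f * (if f u ≠ f v then 1 else 0)) ≤
            2 * ((∑ i, |x u i - x v i|) / 2) / (1 + (∑ i, |x u i - x v i|) / 2) ∧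
        (∑ f : V → Fin k, p f * (if f u ≠ f v then 1 else 0)) ≤
            2 * ((∑ i, |x u i - x v i|) / 2) ∧
        (1 - (∑ i, |x u i - x v i|) / 2) / 2 ≤
            (∑ f : V → Fin k, p f * (if f u = f v then 1 else 0))) ∧
      ((¬ ∀ u : V, ∃ i : Fin k, x u = Pi.single i 1) →
        ∃ f g : V → Fin k, p f ≠ 0 ∧ p g ≠ 0 ∧ f ≠ g) := by
  obtain ⟨hx0, hx1, hxs⟩ := hfeas
  obtain ⟨g⟩ : Nonempty (V → Fin k) :=
    ⟨fun u => (nonempty_of_sum_ne_zero (s := univ) (f := x u) (by simp [hx1 u])).choose⟩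
  refine ⟨ktDist x univ g, fun f => ktDist_nonneg hx0, sum_ktDist hx1, fun f hf i => ?_,
    fun u v => ?_, fun hx => ?_⟩
  · have hpos := pos_of_ktDist_ne_zero hx0 (fun a ha => absurd (mem_univ a) ha) hf (s i)
    by_contra h
    rw [hxs i, Pi.single_eq_of_ne h] at hpos
    exact lt_irrefl 0 hpos
  · have hsame := div_le_sum_ktDist_mul_same hx0 hx1 (g := g) (mem_univ u) (mem_univ v)
    rw [sum_min_div_sum_max (hx1 u) (hx1 v)] at hsame
    refine cut_probability_bounds (by positivity)
      (by linarith [sum_abs_sub_le_two (hx0 u) (hx0 v) (hx1 u) (hx1 v)]) ?_ hsame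
    rw [← sum_add_distrib]
    refine (sum_congr rfl fun f _ => ?_).trans (sum_ktDist hx1 (U := univ) (g := g))
    by_cases h : f u = f v <;> simp [h]
  · push Not at hx
    obtain ⟨u, hu⟩ := hx
    obtain ⟨i, j, hij, hi, hj⟩ := exists_ne_pos_pos_of_ne_single (hx0 u) (hx1 u) hu
    obtain ⟨f, hf, hfu⟩ := exists_ktDist_ne_zero_apply_eq hx0 hx1 (g := g) (mem_univ u) hi
    obtain ⟨f', hf', hf'u⟩ := exists_ktDist_ne_zero_apply_eq hx0 hx1 (g := g) (mem_univ u) hj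
    exact ⟨f, f', hf, hf', fun h => hij (hfu ▸ hf'u ▸ h ▸ rfl)⟩

/-- (Rounding lemma for the CKR LP.)  Given a feasible LP solution `x`,
writing `d(u,v) = ‖x_u − x_v‖₁/2`, there is a finitely supported probability distribution
over multiway cuts `f : V → Fin k` (functions with `f (s i) = i`) such that for all
vertices `u, v`: `Pr[f u ≠ f v] ≤ 2d/(1+d)`, hence `Pr[f u ≠ f v] ≤ 2d` and
`Pr[f u = f v] ≥ (1−d)/2`; moreover, if `x` is not integral, the support of the
distribution contains at least two distinct functions. -/
theorem stmt5 {V : Type*} [Fintype V] [DecidableEq V] {k : ℕ}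
    (s : Fin k → V) (hs : Function.Injective s)
    (x : V → Fin k → ℝ) (hfeas : CKRFeasible s x) :
    ∃ p : (V → Fin k) → ℝ,
      (∀ f, 0 ≤ p f) ∧ (∑ f : V → Fin k, p f = 1) ∧
      (∀ f, p f ≠ 0 → IsMultiwayCut s f) ∧
      (∀ u v : V,
        (∑ f : V → Fin k, p f * (if f u ≠ f v then 1 else 0)) ≤
            2 * ((∑ i, |x u i - x v i|) / 2) / (1 + (∑ i, |x u i - x v i|) / 2) ∧
        (∑ f : V → Fin k, p f * (if f u ≠ f v then 1 else 0)) ≤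
            2 * ((∑ i, |x u i - x v i|) / 2) ∧
        (1 - (∑ i, |x u i - x v i|) / 2) / 2 ≤
            (∑ f : V → Fin k, p f * (if f u = f v then 1 else 0))) ∧
      ((¬ ∀ u : V, ∃ i : Fin k, x u = Pi.single i 1) →
        ∃ f g : V → Fin k, p f ≠ 0 ∧ p g ≠ 0 ∧ f ≠ g) :=
  stmt5_general s x hfeas
end

section
/- Consider the reduction from Sparsest Cut to Max Cut: let V₀ be a finite set with at least two elements, cap and dem symmetric nonnegative functions on unordered pairs of distinct points of V₀, γ ≥ 1, and W∞ > γ·Σ over unordered pairs {u,v} of (2·cap(u,v) + 2·dem(u,v)); let G be the resulting weighted graph on V = V₀×{1,2} and S = V₀×{1}. Suppose that for every A ⊆ V₀ with ∅ ≠ A ≠ V₀: cap(E_c(A,Ā)) > γ·dem(E_d(A,Ā)). Then G is a γ-stable instance of Max Cut with maximum cut (S,S̄): for every T ⊆ V with T ∉ {S, S̄}, w(E(S,S̄)∖E(T,T̄)) > γ·w(E(T,T̄)∖E(S,S̄)). -/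
open Finset

/-- The reduction from Sparsest Cut to Max Cut: the graph on `V₀ × {1,2}` (here
`V₀ × Bool`, side "1" being `false`) with `w(u₁,v₂) = w(u₂,v₁) = cap(u,v)`,
`w(u₁,v₁) = w(u₂,v₂) = dem(u,v)` for `u ≠ v`, and `w(u₁,u₂) = W∞`. -/
noncomputable def reductionWeight {V₀ : Type*} [DecidableEq V₀]
    (cap dem : V₀ → V₀ → ℝ) (Winf : ℝ) :
    V₀ × Bool → V₀ × Bool → ℝ :=
  fun p q =>
    if p.1 = q.1 then (if p.2 = q.2 then 0 else Winf)
    else (if p.2 = q.2 then dem p.1 q.1 else cap p.1 q.1)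

/-!
A cut `T` of `V₀ × {1,2}` either splits every pair `{u₁, u₂}`, and is then the lift
`A × {1} ∪ Ā × {2}` of a cut `A` of `V₀`, or it keeps some pair `{u₁, u₂}` on one side.
For a lift, `E(T,T̄) ∖ E(S,S̄)` consists of the two copies of the demand edges of `E_d(A,Ā)`
and `E(S,S̄) ∖ E(T,T̄)` of the two copies of the capacity edges of `E_c(A,Ā)`, so stability
is exactly the sparsity hypothesis. Otherwise `E(S,S̄) ∖ E(T,T̄)` contains the edge `u₁u₂` of
weight `W∞`, while `E(T,T̄) ∖ E(S,S̄)` only has demand edges, of total weight at most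
`Σ_{u,v} dem(u,v) < W∞ / γ`.
-/

section CutWeight

variable {V : Type*} [Fintype V] {w : V → V → ℝ}

lemma cutWeight_mono_s6 {P Q : V → V → Prop} (hw : ∀ p q, Q p q → 0 ≤ w p q)
    (hPQ : ∀ p q, P p q → Q p q) : cutWeight w P ≤ cutWeight w Q := by
  simp only [cutWeight]
  gcongr with p _ q _
  split_ifs with hP hQ hQ
  exacts [le_rfl, absurd (hPQ p q hP) hQ, hw p q hQ, le_rfl]

lemma cutWeight_true : cutWeight w (fun _ _ => True) = (∑ p, ∑ q, w p q) / 2 := by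
  simp [cutWeight]

lemma add_div_two_le_cutWeight {P : V → V → Prop} (hw : ∀ p q, 0 ≤ w p q) {a b : V}
    (hab : a ≠ b) (hPab : P a b) (hPba : P b a) : (w a b + w b a) / 2 ≤ cutWeight w P := by
  classical
  simp only [cutWeight]
  gcongr
  set f : V → V → ℝ := fun p q => if P p q then w p q else 0
  have hf : ∀ p q, 0 ≤ f p q := fun p q => by by_cases h : P p q <;> simp [f, h, hw]
  calc w a b + w b a
      ≤ (∑ q, f a q) + ∑ q, f b q := by
        gcongr
        · simpa [f, hPab] using single_le_sum (fun q _ => hf a q) (mem_univ b)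
        · simpa [f, hPba] using single_le_sum (fun q _ => hf b q) (mem_univ a)
    _ = ∑ p ∈ {a, b}, ∑ q, f p q := (sum_pair (f := fun p => ∑ q, f p q) hab).symm
    _ ≤ ∑ p, ∑ q, f p q := sum_le_univ_sum_of_nonneg fun p => sum_nonneg fun q _ => hf p q

end CutWeight

lemma ne_of_cutSep {V : Type*} {S : Finset V} {u v : V} (h : cutSep S u v) : u ≠ v := by
  rintro rfl
  exact h.elim (fun h => h.2 h.1) fun h => h.2 h.1

lemma cutSep_filter_snd_eq_false {V₀ : Type*} [Fintype V₀] (p q : V₀ × Bool) :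
    cutSep (univ.filter fun p : V₀ × Bool => p.2 = false) p q ↔ p.2 ≠ q.2 := by
  cases hp : p.2 <;> cases hq : q.2 <;> simp [cutSep, hp, hq]

lemma Fintype.sum_prod_sum_prod {α β M : Type*} [Fintype α] [Fintype β] [AddCommMonoid M]
    (f : α × β → α × β → M) :
    ∑ p, ∑ q, f p q = ∑ u, ∑ v, ∑ b, ∑ b', f (u, b) (v, b') := by
  simp only [Fintype.sum_prod_type]
  exact Finset.sum_congr rfl fun u _ => Finset.sum_comm

section Reduction

variable {V₀ : Type*} [DecidableEq V₀] {cap dem : V₀ → V₀ → ℝ} {Winf : ℝ}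

lemma reductionWeight_nonneg (hcap : ∀ u v, 0 ≤ cap u v) (hdem : ∀ u v, 0 ≤ dem u v)
    (hW : 0 ≤ Winf) (p q : V₀ × Bool) : 0 ≤ reductionWeight cap dem Winf p q := by
  unfold reductionWeight
  split_ifs
  exacts [le_rfl, hW, hdem _ _, hcap _ _]

variable [Fintype V₀]

lemma cutWeight_reductionWeight_of_sameLayer {P : V₀ × Bool → V₀ × Bool → Prop}
    {Q : V₀ → V₀ → Prop} (hQ : ∀ u, ¬ Q u u)
    (hP : ∀ u v b b', P (u, b) (v, b') ↔ b = b' ∧ Q u v) :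
    cutWeight (reductionWeight cap dem Winf) P = 2 * cutWeight dem Q := by
  simp only [cutWeight]
  rw [Fintype.sum_prod_sum_prod, ← mul_div_assoc, mul_sum]
  congr 1
  refine sum_congr rfl fun u _ => ?_
  rw [mul_sum]
  refine sum_congr rfl fun v _ => ?_
  by_cases huv : Q u v
  · have hne : u ≠ v := by rintro rfl; exact hQ u huv
    simp [hP, huv, hne, reductionWeight, two_mul]
  · simp [hP, huv]

lemma cutWeight_reductionWeight_of_crossLayer {P : V₀ × Bool → V₀ × Bool → Prop}
    {Q : V₀ → V₀ → Prop} (hQ : ∀ u, ¬ Q u u)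
    (hP : ∀ u v b b', P (u, b) (v, b') ↔ b ≠ b' ∧ Q u v) :
    cutWeight (reductionWeight cap dem Winf) P = 2 * cutWeight cap Q := by
  simp only [cutWeight]
  rw [Fintype.sum_prod_sum_prod, ← mul_div_assoc, mul_sum]
  congr 1
  refine sum_congr rfl fun u _ => ?_
  rw [mul_sum]
  refine sum_congr rfl fun v _ => ?_
  by_cases huv : Q u v
  · have hne : u ≠ v := by rintro rfl; exact hQ u huv
    simp [hP, huv, hne, reductionWeight, two_mul]
  · simp [hP, huv]

lemma cutWeight_reductionWeight_le_sum_dem (hdem : ∀ u v, 0 ≤ dem u v)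
    {P : V₀ × Bool → V₀ × Bool → Prop} (hP : ∀ p q, P p q → p.2 = q.2 ∧ p.1 ≠ q.1) :
    cutWeight (reductionWeight cap dem Winf) P ≤ ∑ u, ∑ v, dem u v :=
  calc cutWeight (reductionWeight cap dem Winf) P
      ≤ cutWeight (reductionWeight cap dem Winf) fun p q => p.2 = q.2 ∧ p.1 ≠ q.1 :=
        cutWeight_mono_s6 (fun p q hpq => by simp [reductionWeight, hpq.1, hpq.2, hdem]) hP
    _ = 2 * cutWeight dem (· ≠ ·) :=
        cutWeight_reductionWeight_of_sameLayer (fun u h => h rfl) fun _ _ _ _ => Iff.rfl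
    _ ≤ 2 * cutWeight dem fun _ _ => True := by
        gcongr
        exact cutWeight_mono_s6 (fun u v _ => hdem u v) fun _ _ _ => trivial
    _ = ∑ u, ∑ v, dem u v := by rw [cutWeight_true]; ring

lemma cutWeight_reductionWeight_sep_not_sep_le_sum_dem (hdem : ∀ u v, 0 ≤ dem u v)
    (T : Finset (V₀ × Bool)) :
    cutWeight (reductionWeight cap dem Winf)
        (fun p q => cutSep T p q ∧ ¬ cutSep (univ.filter fun p : V₀ × Bool => p.2 = false) p q) ≤
      ∑ u, ∑ v, dem u v := by
  refine cutWeight_reductionWeight_le_sum_dem hdem fun p q ⟨hT, hS⟩ => ?_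
  rw [cutSep_filter_snd_eq_false, not_not] at hS
  exact ⟨hS, fun h => ne_of_cutSep hT (Prod.ext h hS)⟩

lemma le_cutWeight_reductionWeight_sep_not_sep (hw : ∀ p q, 0 ≤ reductionWeight cap dem Winf p q)
    {T : Finset (V₀ × Bool)} {u : V₀} (hu : (u, false) ∈ T ↔ (u, true) ∈ T) :
    Winf ≤ cutWeight (reductionWeight cap dem Winf)
      (fun p q => cutSep (univ.filter fun p : V₀ × Bool => p.2 = false) p q ∧ ¬ cutSep T p q) := by
  have hS : ∀ b, cutSep (univ.filter fun p : V₀ × Bool => p.2 = false) (u, b) (u, !b) := by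
    intro b; cases b <;> simp [cutSep]
  have hT : ∀ b, ¬ cutSep T (u, b) (u, !b) := by
    intro b; cases b <;> simp [cutSep, hu]
  refine le_of_eq_of_le ?_ (add_div_two_le_cutWeight hw (a := (u, false)) (b := (u, true))
    (by simp) ⟨hS false, hT false⟩ ⟨hS true, hT true⟩)
  simp [reductionWeight]

/-- The cut `A × {1} ∪ Ā × {2}` of `V₀ × {1,2}` (side `1` being `false`). -/
def liftCut (A : Finset V₀) : Finset (V₀ × Bool) :=
  univ.filter fun p => (p.1 ∈ A ↔ p.2 = false)

lemma cutSep_liftCut (A : Finset V₀) (u v : V₀) (b b' : Bool) :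
    cutSep (liftCut A) (u, b) (v, b') ↔ (cutSep A u v ↔ b = b') := by
  cases b <;> cases b' <;> simp [liftCut, cutSep] <;> tauto

lemma cutWeight_reductionWeight_liftCut_sep_not_sep (A : Finset V₀) :
    cutWeight (reductionWeight cap dem Winf)
        (fun p q => cutSep (liftCut A) p q ∧
          ¬ cutSep (univ.filter fun p : V₀ × Bool => p.2 = false) p q) =
      2 * cutWeight dem (cutSep A) := by
  refine cutWeight_reductionWeight_of_sameLayer (fun u h => ne_of_cutSep h rfl) fun u v b b' => ?_
  rw [cutSep_liftCut, cutSep_filter_snd_eq_false]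
  by_cases h : cutSep A u v <;> cases b <;> cases b' <;> simp [h]

lemma cutWeight_reductionWeight_not_sep_liftCut_sep (A : Finset V₀) :
    cutWeight (reductionWeight cap dem Winf)
        (fun p q => cutSep (univ.filter fun p : V₀ × Bool => p.2 = false) p q ∧
          ¬ cutSep (liftCut A) p q) =
      2 * cutWeight cap (cutSep A) := by
  refine cutWeight_reductionWeight_of_crossLayer (fun u h => ne_of_cutSep h rfl) fun u v b b' => ?_
  rw [cutSep_liftCut, cutSep_filter_snd_eq_false]
  by_cases h : cutSep A u v <;> cases b <;> cases b' <;> simp [h]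

lemma liftCut_empty :
    liftCut (∅ : Finset V₀) = (univ.filter fun p : V₀ × Bool => p.2 = false)ᶜ := by
  ext ⟨u, b⟩; cases b <;> simp [liftCut]

lemma liftCut_univ :
    liftCut (univ : Finset V₀) = univ.filter fun p : V₀ × Bool => p.2 = false := by
  ext ⟨u, b⟩; cases b <;> simp [liftCut]

lemma exists_eq_liftCut {T : Finset (V₀ × Bool)}
    (hT : ∀ u, ¬((u, false) ∈ T ↔ (u, true) ∈ T)) : ∃ A, T = liftCut A := by
  refine ⟨univ.filter fun u => (u, false) ∈ T, ?_⟩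
  ext ⟨u, b⟩
  cases b
  · simp [liftCut]
  · simpa [liftCut] using (not_iff.mp (hT u)).symm

end Reduction

theorem stmt6_general {V₀ : Type*} [Fintype V₀] [DecidableEq V₀]
    (cap dem : V₀ → V₀ → ℝ)
    (hcapn : ∀ u v, 0 ≤ cap u v) (hdemn : ∀ u v, 0 ≤ dem u v)
    (γ : ℝ) (hγ : 1 ≤ γ) (Winf : ℝ)
    (hW : γ * ((∑ u, ∑ v, (2 * cap u v + 2 * dem u v)) / 2) < Winf)
    (hsparse : ∀ A : Finset V₀, A ≠ ∅ → A ≠ Finset.univ →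
      γ * cutWeight dem (cutSep A) < cutWeight cap (cutSep A)) :
    IsMaxCutStable (reductionWeight cap dem Winf) γ
      (Finset.univ.filter (fun p : V₀ × Bool => p.2 = false)) := by
  intro T hTS hTSc
  have hdem_le : ∑ u, ∑ v, dem u v ≤ (∑ u, ∑ v, (2 * cap u v + 2 * dem u v)) / 2 := by
    simp only [sum_add_distrib, ← mul_sum]
    linarith [sum_nonneg fun u (_ : u ∈ univ) => sum_nonneg fun v (_ : v ∈ univ) => hcapn u v]
  have hWdem : γ * ∑ u, ∑ v, dem u v < Winf :=
    (mul_le_mul_of_nonneg_left hdem_le (by linarith)).trans_lt hW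
  have hWnonneg : 0 ≤ Winf :=
    (mul_nonneg (by linarith) (sum_nonneg fun u _ => sum_nonneg fun v _ => hdemn u v)).trans
      hWdem.le
  by_cases hT : ∃ u, ((u, false) ∈ T ↔ (u, true) ∈ T)
  · obtain ⟨u, hu⟩ := hT
    calc γ * cutWeight _ _ ≤ γ * ∑ u, ∑ v, dem u v :=
          mul_le_mul_of_nonneg_left (cutWeight_reductionWeight_sep_not_sep_le_sum_dem hdemn T)
            (by linarith)
      _ < Winf := hWdem
      _ ≤ cutWeight _ _ :=
          le_cutWeight_reductionWeight_sep_not_sep (reductionWeight_nonneg hcapn hdemn hWnonneg) hu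
  · obtain ⟨A, rfl⟩ := exists_eq_liftCut (not_exists.mp hT)
    have hA : A ≠ ∅ := by rintro rfl; exact hTSc liftCut_empty
    have hA' : A ≠ univ := by rintro rfl; exact hTS liftCut_univ
    rw [cutWeight_reductionWeight_liftCut_sep_not_sep, cutWeight_reductionWeight_not_sep_liftCut_sep]
    linarith [hsparse A hA hA']

/-- In the reduction from Sparsest Cut to Max Cut, if every nontrivial
cut `(A, Ā)` of `V₀` has sparsity greater than `γ`, i.e.
`cap(E_c(A,Ā)) > γ·dem(E_d(A,Ā))`, and `W∞ > γ·Σ_{pairs}(2cap + 2dem)`, then the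
resulting graph `G` on `V₀ × {1,2}` is a `γ`-stable instance of Max Cut with maximum
cut `(S, S̄)`, `S = V₀ × {1}`. -/
theorem stmt6 {V₀ : Type*} [Fintype V₀] [DecidableEq V₀]
    (hcard : 2 ≤ Fintype.card V₀)
    (cap dem : V₀ → V₀ → ℝ)
    (hcaps : ∀ u v, cap u v = cap v u) (hdems : ∀ u v, dem u v = dem v u)
    (hcapn : ∀ u v, 0 ≤ cap u v) (hdemn : ∀ u v, 0 ≤ dem u v)
    (hcap0 : ∀ u, cap u u = 0) (hdem0 : ∀ u, dem u u = 0)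
    (γ : ℝ) (hγ : 1 ≤ γ) (Winf : ℝ)
    (hW : γ * ((∑ u, ∑ v, (2 * cap u v + 2 * dem u v)) / 2) < Winf)
    (hsparse : ∀ A : Finset V₀, A ≠ ∅ → A ≠ Finset.univ →
      γ * cutWeight dem (cutSep A) < cutWeight cap (cutSep A)) :
    IsMaxCutStable (reductionWeight cap dem Winf) γ
      (Finset.univ.filter (fun p : V₀ × Bool => p.2 = false)) :=
  stmt6_general cap dem hcapn hdemn γ hγ Winf hW hsparse
end

section
/- Let {x_u : u ∈ U} be a family of unit vectors in a real inner product space such that ‖x_u − x_v‖² ≤ 1 for all u,v ∈ U and ‖x_u − x_v‖² + ‖x_v − x_w‖² ≥ ‖x_u − x_w‖² for all u,v,w ∈ U. Then the set {x_u, −x_u : u ∈ U} satisfies the ℓ2²-triangle inequalities: for all u,v,w ∈ U and all signs ε₁, ε₂, ε₃ ∈ {+1,−1}, ‖ε₁x_u − ε₂x_v‖² + ‖ε₂x_v − ε₃x_w‖² ≥ ‖ε₁x_u − ε₃x_w‖². -/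
/-!
For unit vectors `‖p + q‖² = 4 - ‖p - q‖²`, so flipping the sign of one point of a triangle
turns two of its squared side lengths `d` into `4 - d`. After a global sign change we may
assume the middle point is unflipped; flipping one endpoint then yields a permuted triangle
inequality of the original points, and flipping both endpoints is harmless because the two
long sides have squared length at least `3` while every short side has squared length at most `1`.
-/

open Set

lemma neg_mem_union_neg {α : Type*} [InvolutiveNeg α] {S : Set α} {p : α} (hp : p ∈ S ∪ -S) :
    -p ∈ S ∪ -S := by
  rw [mem_union, mem_neg, neg_neg, or_comm]
  exact hp

lemma smul_mem_union_neg {M : Type*} [AddCommGroup M] [Module ℝ M] {S : Set M} {p : M} {ε : ℝ}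
    (hε : ε = 1 ∨ ε = -1) (hp : p ∈ S) : ε • p ∈ S ∪ -S := by
  rcases hε with rfl | rfl
  · simpa using Or.inl hp
  · simpa using Or.inr hp

def IsL22Triangle {E : Type*} [SeminormedAddCommGroup E] (S : Set E) : Prop :=
  ∀ p ∈ S, ∀ q ∈ S, ∀ r ∈ S, ‖p - r‖ ^ 2 ≤ ‖p - q‖ ^ 2 + ‖q - r‖ ^ 2

section InnerProductSpace

variable {H : Type*} [NormedAddCommGroup H] [InnerProductSpace ℝ H]

lemma norm_add_sq_of_norm_eq_one {p q : H} (hp : ‖p‖ = 1) (hq : ‖q‖ = 1) :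
    ‖p + q‖ ^ 2 = 4 - ‖p - q‖ ^ 2 := by
  have := parallelogram_law_with_norm ℝ p q
  rw [hp, hq] at this
  linarith

lemma norm_sub_neg_sq_of_norm_eq_one {p q : H} (hp : ‖p‖ = 1) (hq : ‖q‖ = 1) :
    ‖p - -q‖ ^ 2 = 4 - ‖p - q‖ ^ 2 := by
  rw [sub_neg_eq_add, norm_add_sq_of_norm_eq_one hp hq]

lemma norm_neg_sub_sq_of_norm_eq_one {p q : H} (hp : ‖p‖ = 1) (hq : ‖q‖ = 1) :
    ‖-p - q‖ ^ 2 = 4 - ‖p - q‖ ^ 2 := by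
  rw [← neg_add', norm_neg, norm_add_sq_of_norm_eq_one hp hq]

theorem IsL22Triangle.union_neg {S : Set H} (hS : IsL22Triangle S)
    (hunit : ∀ p ∈ S, ‖p‖ = 1) (hsmall : ∀ p ∈ S, ∀ q ∈ S, ‖p - q‖ ^ 2 ≤ 1) :
    IsL22Triangle (S ∪ -S) := by
  intro p hp q hq r hr
  wlog hqS : q ∈ S generalizing p q r
  · have hq' : -q ∈ S := by simpa [hqS] using hq
    simpa only [← neg_sub', norm_neg] using
      this (-p) (neg_mem_union_neg hp) (-q) (neg_mem_union_neg hq) (-r) (neg_mem_union_neg hr) hq'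
  have hsymm : ∀ a b : H, ‖a - b‖ ^ 2 = ‖b - a‖ ^ 2 := fun a b => by rw [norm_sub_rev]
  rcases hp with hpS | hpS <;> rcases hr with hrS | hrS
  · exact hS p hpS q hqS r hrS
  · obtain ⟨r, hr, rfl⟩ : ∃ r' ∈ S, -r' = r := ⟨-r, hrS, neg_neg r⟩
    rw [norm_sub_neg_sq_of_norm_eq_one (hunit p hpS) (hunit r hr),
      norm_sub_neg_sq_of_norm_eq_one (hunit q hqS) (hunit r hr)]
    linarith [hS q hqS p hpS r hr, hsymm p q]
  · obtain ⟨p, hp, rfl⟩ : ∃ p' ∈ S, -p' = p := ⟨-p, hpS, neg_neg p⟩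
    rw [norm_neg_sub_sq_of_norm_eq_one (hunit p hp) (hunit r hrS),
      norm_neg_sub_sq_of_norm_eq_one (hunit p hp) (hunit q hqS)]
    linarith [hS p hp r hrS q hqS, hsymm q r]
  · obtain ⟨p, hp, rfl⟩ : ∃ p' ∈ S, -p' = p := ⟨-p, hpS, neg_neg p⟩
    obtain ⟨r, hr, rfl⟩ : ∃ r' ∈ S, -r' = r := ⟨-r, hrS, neg_neg r⟩
    rw [neg_sub_neg, norm_sub_rev, norm_neg_sub_sq_of_norm_eq_one (hunit p hp) (hunit q hqS),
      norm_sub_neg_sq_of_norm_eq_one (hunit q hqS) (hunit r hr)]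
    linarith [hsmall p hp r hr, hsmall p hp q hqS, hsmall q hqS r hr]

end InnerProductSpace

/-- If `{x_u : u ∈ U}` are unit vectors in a real inner product space
with `‖x_u − x_v‖² ≤ 1` for all `u, v` and satisfying the `ℓ2²`-triangle inequalities
among themselves, then the whole set `{x_u, −x_u : u ∈ U}` satisfies the `ℓ2²`-triangle
inequalities: for all `u, v, w` and all signs `ε₁, ε₂, ε₃ ∈ {+1, −1}`,
`‖ε₁x_u − ε₂x_v‖² + ‖ε₂x_v − ε₃x_w‖² ≥ ‖ε₁x_u − ε₃x_w‖²`. -/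
theorem stmt9 {U : Type*} {H : Type*} [NormedAddCommGroup H] [InnerProductSpace ℝ H]
    (x : U → H) (hunit : ∀ u, ‖x u‖ = 1)
    (hsmall : ∀ u v, ‖x u - x v‖ ^ 2 ≤ 1)
    (htri : ∀ u v w, ‖x u - x v‖ ^ 2 + ‖x v - x w‖ ^ 2 ≥ ‖x u - x w‖ ^ 2) :
    ∀ u v w : U, ∀ ε₁ ε₂ ε₃ : ℝ,
      (ε₁ = 1 ∨ ε₁ = -1) → (ε₂ = 1 ∨ ε₂ = -1) → (ε₃ = 1 ∨ ε₃ = -1) →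
      ‖ε₁ • x u - ε₂ • x v‖ ^ 2 + ‖ε₂ • x v - ε₃ • x w‖ ^ 2 ≥
        ‖ε₁ • x u - ε₃ • x w‖ ^ 2 := by
  intro u v w ε₁ ε₂ ε₃ h₁ h₂ h₃
  have hS : IsL22Triangle (range x) := by
    rintro _ ⟨u, rfl⟩ _ ⟨v, rfl⟩ _ ⟨w, rfl⟩
    exact htri u v w
  have hS' : IsL22Triangle (range x ∪ -range x) :=
    hS.union_neg (by rintro _ ⟨u, rfl⟩; exact hunit u)
      (by rintro _ ⟨u, rfl⟩ _ ⟨v, rfl⟩; exact hsmall u v)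
  exact hS' _ (smul_mem_union_neg h₁ (mem_range_self u)) _
    (smul_mem_union_neg h₂ (mem_range_self v)) _ (smul_mem_union_neg h₃ (mem_range_self w))
end

section
/- Let G be a finite simple graph, let k ≥ 4, and let G' be the join of G with the complete graph on k−3 new vertices: V(G') = V(G) ⊎ W with |W| = k−3, and the edges of G' are the edges of G, all pairs of distinct vertices within W, and all pairs with one endpoint in V(G) and the other in W. Then G is uniquely 3-colorable if and only if G' is uniquely k-colorable. -/
/-!
Up to a permutation of the colors, a proper `(n + m)`-coloring of the join of `G` with `K_m`
gives the clique the last `m` colors, so it is the canonical extension of a proper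
`n`-coloring of `G`. Permutations of the first `n` colors correspond exactly to permutations of
all `n + m` colors that fix the last `m`, so `G` is uniquely `n`-colorable iff the join is
uniquely `(n + m)`-colorable; the theorem is the case `n = 3`.
-/

/-- `G` is uniquely `m`-colorable: it has a proper `m`-coloring, and any two proper
`m`-colorings differ by a permutation of the colors. -/
def UniquelyColorable {β : Type*} (G : SimpleGraph β) (m : ℕ) : Prop :=
  (∃ c : β → Fin m, ∀ u v, G.Adj u v → c u ≠ c v) ∧
  (∀ c₁ c₂ : β → Fin m, (∀ u v, G.Adj u v → c₁ u ≠ c₁ v) →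
    (∀ u v, G.Adj u v → c₂ u ≠ c₂ v) →
    ∃ π : Equiv.Perm (Fin m), c₂ = ⇑π ∘ c₁)

/-- The join of `G` with a complete graph on `m` new vertices: vertex set `V(G) ⊎ Fin m`;
edges are the edges of `G`, all pairs of distinct new vertices, and all pairs with one
endpoint in `V(G)` and the other a new vertex. -/
def joinWithClique {α : Type*} (G : SimpleGraph α) (m : ℕ) :
    SimpleGraph (α ⊕ Fin m) :=
  SimpleGraph.fromRel (fun x y =>
    match x, y with
    | Sum.inl u, Sum.inl v => G.Adj u v
    | _, _ => True)

def IsProperColoring {β γ : Type*} (G : SimpleGraph β) (c : β → γ) : Prop :=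
  ∀ u v, G.Adj u v → c u ≠ c v

theorem IsProperColoring.comp_injective {β γ δ : Type*} {G : SimpleGraph β} {c : β → γ}
    (hc : IsProperColoring G c) {f : γ → δ} (hf : Function.Injective f) :
    IsProperColoring G (f ∘ c) :=
  fun u v huv => hf.ne (hc u v huv)

theorem Fin.castAdd_ne_natAdd {n m : ℕ} (j : Fin n) (i : Fin m) :
    Fin.castAdd m j ≠ Fin.natAdd n i :=
  Fin.ne_of_lt (Nat.lt_add_right i j.isLt)

theorem Fin.exists_castAdd_eq_of_forall_ne_natAdd {n m : ℕ} {x : Fin (n + m)}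
    (hx : ∀ i, x ≠ Fin.natAdd n i) : ∃ j, Fin.castAdd m j = x := by
  induction x using Fin.addCases with
  | left j => exact ⟨j, rfl⟩
  | right i => exact absurd rfl (hx i)

section joinWithClique

variable {α : Type*} {G : SimpleGraph α} {n m : ℕ}

@[simp]
theorem joinWithClique_adj_inl_inl {u v : α} :
    (joinWithClique G m).Adj (.inl u) (.inl v) ↔ G.Adj u v := by
  simp only [joinWithClique, SimpleGraph.fromRel_adj, ne_eq, Sum.inl.injEq]
  exact ⟨fun ⟨_, h⟩ => h.elim id G.adj_symm, fun h => ⟨G.ne_of_adj h, .inl h⟩⟩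

@[simp]
theorem joinWithClique_adj_inl_inr {u : α} {i : Fin m} :
    (joinWithClique G m).Adj (.inl u) (.inr i) := by
  simp [joinWithClique]

@[simp]
theorem joinWithClique_adj_inr_inr {i j : Fin m} :
    (joinWithClique G m).Adj (.inr i) (.inr j) ↔ i ≠ j := by
  simp [joinWithClique]

def joinColoring (d : α → Fin n) : α ⊕ Fin m → Fin (n + m) :=
  Sum.elim (fun u => Fin.castAdd m (d u)) (Fin.natAdd n)

theorem isProperColoring_joinColoring_iff {d : α → Fin n} :
    IsProperColoring (joinWithClique G m) (joinColoring d) ↔ IsProperColoring G d := by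
  constructor
  · intro h u v huv hd
    exact h (.inl u) (.inl v) (joinWithClique_adj_inl_inl.2 huv) (by simp [joinColoring, hd])
  · rintro h (u | i) (v | j) huv
    · exact (Fin.castAdd_injective n m).ne (h u v (joinWithClique_adj_inl_inl.1 huv))
    · exact Fin.castAdd_ne_natAdd _ _
    · exact (Fin.castAdd_ne_natAdd _ _).symm
    · simpa [joinColoring] using joinWithClique_adj_inr_inr.1 huv

def permCastAdd (m : ℕ) (σ : Equiv.Perm (Fin n)) : Equiv.Perm (Fin (n + m)) :=
  finSumFinEquiv.permCongr (σ.sumCongr (Equiv.refl _))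

theorem joinColoring_perm_comp (σ : Equiv.Perm (Fin n)) (d : α → Fin n) :
    joinColoring (m := m) (σ ∘ d) = permCastAdd m σ ∘ joinColoring d := by
  funext x
  cases x <;> simp [joinColoring, permCastAdd, Equiv.permCongr_apply]

/-- The clique uses `m` distinct colors, and a permutation moves them to the last `m`. -/
theorem exists_perm_comp_eq_joinColoring {c : α ⊕ Fin m → Fin (n + m)}
    (hc : IsProperColoring (joinWithClique G m) c) :
    ∃ (π : Equiv.Perm (Fin (n + m))) (d : α → Fin n),
      IsProperColoring G d ∧ π ∘ c = joinColoring d := by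
  have hclique : Function.Injective (c ∘ Sum.inr) := fun i j hij => by
    by_contra hne
    exact hc _ _ (joinWithClique_adj_inr_inr.2 hne) hij
  obtain ⟨π, hπ⟩ := Equiv.Perm.exists_extending_pair _ _ hclique (Fin.natAdd_injective m n)
  have hG : ∀ u, ∃ j, Fin.castAdd m j = π (c (.inl u)) := fun u =>
    Fin.exists_castAdd_eq_of_forall_ne_natAdd fun i hi =>
      hc _ _ joinWithClique_adj_inl_inr (π.injective (hi.trans (hπ i).symm))
  choose d hd using hG
  have hπc : π ∘ c = joinColoring d := funext fun x => by
    cases x with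
    | inl u => exact (hd u).symm
    | inr i => exact hπ i
  refine ⟨π, d, (isProperColoring_joinColoring_iff (m := m)).1 ?_, hπc⟩
  exact hπc ▸ hc.comp_injective π.injective

theorem exists_perm_comp_of_joinColoring_eq {d₁ d₂ : α → Fin n} {π : Equiv.Perm (Fin (n + m))}
    (h : joinColoring d₂ = π ∘ joinColoring d₁) :
    ∃ τ : Equiv.Perm (Fin n), d₂ = τ ∘ d₁ := by
  have hfix (i : Fin m) : π (Fin.natAdd n i) = Fin.natAdd n i := (congrFun h (.inr i)).symm
  have hleft : ∀ j, ∃ j', Fin.castAdd m j' = π (Fin.castAdd m j) := fun j =>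
    Fin.exists_castAdd_eq_of_forall_ne_natAdd fun i hi =>
      Fin.castAdd_ne_natAdd _ _ (π.injective (hi.trans (hfix i).symm))
  choose τ hτ using hleft
  have hτinj : Function.Injective τ := fun j j' hjj' =>
    Fin.castAdd_injective n m (π.injective (by rw [← hτ, ← hτ, hjj']))
  refine ⟨Equiv.ofBijective τ (Finite.injective_iff_bijective.mp hτinj), funext fun u => ?_⟩
  apply Fin.castAdd_injective n m
  simpa [joinColoring, ← hτ] using congrFun h (.inl u)

theorem uniquelyColorable_of_joinWithClique (h : UniquelyColorable (joinWithClique G m) (n + m)) :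
    UniquelyColorable G n := by
  obtain ⟨⟨c, hc⟩, huniq⟩ := h
  refine ⟨?_, fun d₁ d₂ hd₁ hd₂ => ?_⟩
  · obtain ⟨-, d, hd, -⟩ := exists_perm_comp_eq_joinColoring hc
    exact ⟨d, hd⟩
  · obtain ⟨π, hπ⟩ := huniq _ _ (isProperColoring_joinColoring_iff.2 hd₁)
      (isProperColoring_joinColoring_iff.2 hd₂)
    exact exists_perm_comp_of_joinColoring_eq hπ

theorem UniquelyColorable.joinWithClique (h : UniquelyColorable G n) :
    UniquelyColorable (joinWithClique G m) (n + m) := by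
  obtain ⟨⟨d, hd⟩, huniq⟩ := h
  refine ⟨⟨joinColoring d, isProperColoring_joinColoring_iff.2 hd⟩, fun c₁ c₂ hc₁ hc₂ => ?_⟩
  obtain ⟨π₁, d₁, hd₁, h₁⟩ := exists_perm_comp_eq_joinColoring hc₁
  obtain ⟨π₂, d₂, hd₂, h₂⟩ := exists_perm_comp_eq_joinColoring hc₂
  obtain ⟨σ, rfl⟩ := huniq d₁ d₂ hd₁ hd₂
  refine ⟨π₁.trans ((permCastAdd m σ).trans π₂.symm), funext fun x => ?_⟩
  have h₁x := congrFun h₁ x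
  have h₂x := congrFun (h₂.trans (joinColoring_perm_comp σ d₁)) x
  simp only [Function.comp_apply] at h₁x h₂x
  simp [Equiv.eq_symm_apply, h₂x, h₁x]

theorem uniquelyColorable_joinWithClique_iff :
    UniquelyColorable (joinWithClique G m) (n + m) ↔ UniquelyColorable G n :=
  ⟨uniquelyColorable_of_joinWithClique, UniquelyColorable.joinWithClique⟩

end joinWithClique

theorem stmt13_general {α : Type*} (G : SimpleGraph α) (k : ℕ) (hk : 4 ≤ k) :
    UniquelyColorable G 3 ↔ UniquelyColorable (joinWithClique G (k - 3)) k := by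
  obtain ⟨m, rfl⟩ : ∃ m, k = 3 + m := ⟨k - 3, by omega⟩
  rw [Nat.add_sub_cancel_left]
  exact uniquelyColorable_joinWithClique_iff.symm

/-- For `k ≥ 4`, a finite simple graph `G` is uniquely `3`-colorable
if and only if the join `G'` of `G` with the complete graph on `k − 3` new vertices is
uniquely `k`-colorable. -/
theorem stmt13 {α : Type*} [Fintype α] (G : SimpleGraph α) (k : ℕ) (hk : 4 ≤ k) :
    UniquelyColorable G 3 ↔ UniquelyColorable (joinWithClique G (k - 3)) k :=
  stmt13_general G k hk
end
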